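/- arXiv:2306.17774 — 2 statements merged into one kernel-verified Lean document; each statement's English description precedes it below -/
import Mathlib

section
/- Let (u, v, pu, pv) solve the FLRW null geodesic system on an interval I with angular momentum L ≥ 0. If the mass shell relation 4t²r²·pu·pv = L² holds at some point s₁ ∈ I, then it holds at every point of I. (Indeed, M := 4t²r²·pu·pv satisfies the linear ODE M' = (t^{−1/2}(pu+pv) + 2r'/r)·(M − L²) along the flow.) -/
/-!
Differentiating `M = 4t²r²·pu·pv` along the flow with the geodesic equations, the `L²`-terms
assemble so that `M - L²` solves the linear equation `(M - L²)' = c·(M - L²)` with a coefficient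
`c` continuous on `I`. A solution of a linear equation vanishing at one point of an interval
vanishes on all of it, by uniqueness for Lipschitz ODEs.
-/

/-- The time coordinate `t = (v+u)²/4` along a curve in double null coordinates. -/
noncomputable def tOf (u v : ℝ → ℝ) (s : ℝ) : ℝ := (v s + u s) ^ 2 / 4

/-- The radial coordinate `r = v − u` along a curve in double null coordinates. -/
noncomputable def rOf (u v : ℝ → ℝ) (s : ℝ) : ℝ := v s - u s

/-- **The FLRW null geodesic system** with angular momentum `L` on a set `I ⊆ ℝ`:
`u' = pu`, `v' = pv`,
`pu' = −t^{−1/2}·pu² − (1/2)(1/(2t^{1/2}) + 1/r)·L²/(t²r²)`,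
`pv' = −t^{−1/2}·pv² − (1/2)(1/(2t^{1/2}) − 1/r)·L²/(t²r²)`,
where `t = (v+u)²/4` and `r = v−u` are required to satisfy `v+u > 0`, `r > 0` on `I`,
and `pu ≥ 0`, `pv ≥ 0` on `I`. -/
def FLRWGeodesicSystem (I : Set ℝ) (L : ℝ) (u v pu pv : ℝ → ℝ) : Prop :=
  (∀ s ∈ I, 0 < v s + u s) ∧
  (∀ s ∈ I, 0 < rOf u v s) ∧
  (∀ s ∈ I, 0 ≤ pu s) ∧
  (∀ s ∈ I, 0 ≤ pv s) ∧
  (∀ s ∈ I, HasDerivAt u (pu s) s) ∧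
  (∀ s ∈ I, HasDerivAt v (pv s) s) ∧
  (∀ s ∈ I, HasDerivAt pu
    (-(pu s) ^ 2 / Real.sqrt (tOf u v s)
      - 1 / 2 * (1 / (2 * Real.sqrt (tOf u v s)) + 1 / rOf u v s) * L ^ 2
          / ((tOf u v s) ^ 2 * (rOf u v s) ^ 2)) s) ∧
  (∀ s ∈ I, HasDerivAt pv
    (-(pv s) ^ 2 / Real.sqrt (tOf u v s)
      - 1 / 2 * (1 / (2 * Real.sqrt (tOf u v s)) - 1 / rOf u v s) * L ^ 2
          / ((tOf u v s) ^ 2 * (rOf u v s) ^ 2)) s)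

open Set NNReal

section LinearODE

variable {E : Type*} [NormedAddCommGroup E] [NormedSpace ℝ E]

theorem lipschitzWith_smul_sub_const {c : ℝ} {K : ℝ≥0} (hc : |c| ≤ K) (A : E) :
    LipschitzWith K fun x : E => c • (x - A) := by
  refine LipschitzWith.of_dist_le_mul fun x y => ?_
  rw [dist_eq_norm, dist_eq_norm, ← smul_sub, sub_sub_sub_cancel_right, norm_smul,
    Real.norm_eq_abs]
  gcongr

/-- Continuity bounds `c` on compact subintervals, so there the right-hand side of
`f' = c (f - A)` is uniformly Lipschitz and `f` agrees with the constant solution. -/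
theorem Set.OrdConnected.eqOn_const_of_hasDerivAt_smul_sub {I : Set ℝ} (hI : I.OrdConnected)
    {c : ℝ → ℝ} {f : ℝ → E} {A : E} (hc : ContinuousOn c I)
    (hf : ∀ s ∈ I, HasDerivAt f (c s • (f s - A)) s) {s₀ : ℝ} (hs₀ : s₀ ∈ I) (h₀ : f s₀ = A) :
    EqOn f (fun _ => A) I := by
  intro s hs
  have hJ : uIcc s₀ s ⊆ I := hI.uIcc_subset hs₀ hs
  obtain ⟨C, hC⟩ := isCompact_uIcc.exists_bound_of_continuousOn (hc.mono hJ)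
  have hlip : ∀ τ ∈ uIcc s₀ s, LipschitzOnWith C.toNNReal (fun x => c τ • (x - A)) univ :=
    fun τ hτ => (lipschitzWith_smul_sub_const ((hC τ hτ).trans (Real.le_coe_toNNReal C)) A)
      |>.lipschitzOnWith
  have hfJ : ContinuousOn f (uIcc s₀ s) := HasDerivAt.continuousOn fun τ hτ => hf τ (hJ hτ)
  have hA : ∀ τ, HasDerivAt (fun _ => A) (c τ • (A - A)) τ := fun τ => by
    simpa using hasDerivAt_const τ A
  rcases le_total s₀ s with h | h
  · rw [uIcc_of_le h] at hJ hlip hfJ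
    exact ODE_solution_unique_of_mem_Icc_right (s := fun _ => univ)
      (fun τ hτ => hlip τ (Ico_subset_Icc_self hτ)) hfJ
      (fun τ hτ => (hf τ (hJ (Ico_subset_Icc_self hτ))).hasDerivWithinAt)
      (fun _ _ => mem_univ _) continuousOn_const (fun τ _ => (hA τ).hasDerivWithinAt)
      (fun _ _ => mem_univ _) h₀ (right_mem_Icc.mpr h)
  · rw [uIcc_of_ge h] at hJ hlip hfJ
    exact ODE_solution_unique_of_mem_Icc_left (s := fun _ => univ)
      (fun τ hτ => hlip τ (Ioc_subset_Icc_self hτ)) hfJ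
      (fun τ hτ => (hf τ (hJ (Ioc_subset_Icc_self hτ))).hasDerivWithinAt)
      (fun _ _ => mem_univ _) continuousOn_const (fun τ _ => (hA τ).hasDerivWithinAt)
      (fun _ _ => mem_univ _) h₀ (left_mem_Icc.mpr h)

end LinearODE

section DoubleNull

variable {u v : ℝ → ℝ} {s du dv : ℝ}

theorem tOf_pos (h : 0 < v s + u s) : 0 < tOf u v s := by
  unfold tOf; positivity

theorem sqrt_tOf (h : 0 ≤ v s + u s) : √(tOf u v s) = (v s + u s) / 2 := by
  rw [tOf, show (v s + u s) ^ 2 / 4 = ((v s + u s) / 2) ^ 2 by ring, Real.sqrt_sq (by linarith)]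

theorem hasDerivAt_tOf (hu : HasDerivAt u du s) (hv : HasDerivAt v dv s) :
    HasDerivAt (tOf u v) ((v s + u s) / 2 * (du + dv)) s := by
  refine (((hv.add hu).pow 2).div_const 4).congr_deriv ?_
  simp only [Pi.add_apply]
  ring

theorem hasDerivAt_rOf (hu : HasDerivAt u du s) (hv : HasDerivAt v dv s) :
    HasDerivAt (rOf u v) (dv - du) s :=
  hv.sub hu

end DoubleNull

noncomputable def massShell (u v pu pv : ℝ → ℝ) (s : ℝ) : ℝ :=
  4 * tOf u v s ^ 2 * rOf u v s ^ 2 * pu s * pv s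

noncomputable def massShellRate (u v pu pv : ℝ → ℝ) (s : ℝ) : ℝ :=
  (pu s + pv s) / √(tOf u v s) + 2 * (pv s - pu s) / rOf u v s

namespace FLRWGeodesicSystem

variable {I : Set ℝ} {L : ℝ} {u v pu pv : ℝ → ℝ}

theorem hasDerivAt_massShell (hsys : FLRWGeodesicSystem I L u v pu pv) {s : ℝ} (hs : s ∈ I) :
    HasDerivAt (massShell u v pu pv)
      (massShellRate u v pu pv s * (massShell u v pu pv s - L ^ 2)) s := by
  obtain ⟨hsum, hr, -, -, hu, hv, hpu, hpv⟩ := hsys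
  have hσ := sqrt_tOf (hsum s hs).le
  have ht : HasDerivAt (tOf u v) (√(tOf u v s) * (pu s + pv s)) s := by
    rw [hσ]; exact hasDerivAt_tOf (hu s hs) (hv s hs)
  have hM := (((ht.pow 2).const_mul 4).mul ((hasDerivAt_rOf (hu s hs) (hv s hs)).pow 2)).mul
    (hpu s hs) |>.mul (hpv s hs)
  refine hM.congr_deriv ?_
  have hσ_pos : 0 < √(tOf u v s) := Real.sqrt_pos.2 (tOf_pos (hsum s hs))
  have hr_pos := hr s hs
  -- eliminate `t` in favour of `σ = √t`, after which the identity is rational in `σ` and `r`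
  have ht_eq : tOf u v s = √(tOf u v s) ^ 2 := (Real.sq_sqrt (tOf_pos (hsum s hs)).le).symm
  simp only [Pi.mul_apply, Pi.pow_apply, massShell, massShellRate]
  generalize √(tOf u v s) = σ at hσ_pos ht_eq ⊢
  rw [ht_eq]
  field_simp
  ring

theorem continuousOn_massShellRate (hsys : FLRWGeodesicSystem I L u v pu pv) :
    ContinuousOn (massShellRate u v pu pv) I := by
  obtain ⟨hsum, hr, -, -, hu, hv, hpu, hpv⟩ := hsys
  intro s hs
  have ht := (hasDerivAt_tOf (hu s hs) (hv s hs)).continuousAt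
  have hσ_pos : 0 < √(tOf u v s) := Real.sqrt_pos.2 (tOf_pos (hsum s hs))
  refine ContinuousAt.continuousWithinAt ?_
  exact (((hpu s hs).continuousAt.add (hpv s hs).continuousAt).div
      (Real.continuous_sqrt.continuousAt.comp ht) hσ_pos.ne').add
    ((continuousAt_const.mul ((hpv s hs).continuousAt.sub (hpu s hs).continuousAt)).div
      (hasDerivAt_rOf (hu s hs) (hv s hs)).continuousAt (hr s hs).ne')

end FLRWGeodesicSystem

theorem flrw_geodesic_mass_shell_propagates_general (I : Set ℝ) (hI : Convex ℝ I)
    (L : ℝ) (u v pu pv : ℝ → ℝ)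
    (hsys : FLRWGeodesicSystem I L u v pu pv)
    (hms : ∃ s₁ ∈ I, 4 * (tOf u v s₁) ^ 2 * (rOf u v s₁) ^ 2 * pu s₁ * pv s₁ = L ^ 2) :
    (∀ s ∈ I, 4 * (tOf u v s) ^ 2 * (rOf u v s) ^ 2 * pu s * pv s = L ^ 2) ∧
    (∀ s ∈ I, HasDerivAt
      (fun s' => 4 * (tOf u v s') ^ 2 * (rOf u v s') ^ 2 * pu s' * pv s')
      (((pu s + pv s) / Real.sqrt (tOf u v s) + 2 * (pv s - pu s) / rOf u v s) *
        (4 * (tOf u v s) ^ 2 * (rOf u v s) ^ 2 * pu s * pv s - L ^ 2)) s) := by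
  obtain ⟨s₁, hs₁, h₁⟩ := hms
  have hM : ∀ s ∈ I, HasDerivAt (massShell u v pu pv)
      (massShellRate u v pu pv s • (massShell u v pu pv s - L ^ 2)) s :=
    fun s hs => hsys.hasDerivAt_massShell hs
  exact ⟨fun s hs => hI.ordConnected.eqOn_const_of_hasDerivAt_smul_sub
    hsys.continuousOn_massShellRate hM hs₁ h₁ hs, hM⟩

/-- **Propagation of the mass shell relation along FLRW null geodesics.**
If `(u,v,pu,pv)` solves the FLRW null geodesic system on an interval `I` with angular
momentum `L ≥ 0` and the mass shell relation `4t²r²·pu·pv = L²` holds at some point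
`s₁ ∈ I`, then it holds at every point of `I`.  Indeed, `M := 4t²r²·pu·pv` satisfies
the linear ODE `M' = (t^{−1/2}(pu+pv) + 2r'/r)·(M − L²)` along the flow
(where `r' = pv − pu`). -/
theorem flrw_geodesic_mass_shell_propagates (I : Set ℝ) (hI : Convex ℝ I)
    (L : ℝ) (hL : 0 ≤ L) (u v pu pv : ℝ → ℝ)
    (hsys : FLRWGeodesicSystem I L u v pu pv)
    (hms : ∃ s₁ ∈ I, 4 * (tOf u v s₁) ^ 2 * (rOf u v s₁) ^ 2 * pu s₁ * pv s₁ = L ^ 2) :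
    (∀ s ∈ I, 4 * (tOf u v s) ^ 2 * (rOf u v s) ^ 2 * pu s * pv s = L ^ 2) ∧
    (∀ s ∈ I, HasDerivAt
      (fun s' => 4 * (tOf u v s') ^ 2 * (rOf u v s') ^ 2 * pu s' * pv s')
      (((pu s + pv s) / Real.sqrt (tOf u v s) + 2 * (pv s - pu s) / rOf u v s) *
        (4 * (tOf u v s) ^ 2 * (rOf u v s) ^ 2 * pu s * pv s - L ^ 2)) s) :=
  flrw_geodesic_mass_shell_propagates_general I hI L u v pu pv hsys hms
end

section
/- Let (u, v, pu, pv) solve the FLRW null geodesic system on [s₀,S) with angular momentum L ≥ 0, with the mass shell relation 4t²r²·pu·pv = L² holding on [s₀,S), and with pv(s₀) > 0 and 0 ≤ pu(s₀) ≤ (1/2)·pv(s₀). Then for all s ∈ [s₀,S): (i) t(s₀)·pv(s₀) ≤ t(s)·pv(s) ≤ 2·t(s₀)·pv(s₀); (ii) 0 ≤ pu(s) ≤ 2·t(s₀)·r(s₀)²·pv(s₀)/(t(s)·r(s)²); (iii) t(s)·(pv(s) − pu(s)) ≥ t(s₀)·(pv(s₀) − pu(s₀)) ≥ (1/2)·t(s₀)·pv(s₀),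 and r is strictly increasing on [s₀,S); (iv) u is nondecreasing on [s₀,S) and u(s₀) ≤ u(s) ≤ u(s₀) + 4·r(s₀). -/
open Set

section Calculus

variable {D : Set ℝ} {f f' : ℝ → ℝ}

theorem monotoneOn_of_hasDerivAt_nonneg (hD : Convex ℝ D) (hf : ∀ x ∈ D, HasDerivAt f (f' x) x)
    (hf'₀ : ∀ x ∈ D, 0 ≤ f' x) : MonotoneOn f D :=
  monotoneOn_of_hasDerivWithinAt_nonneg hD (fun x hx ↦ (hf x hx).continuousAt.continuousWithinAt)
    (fun x hx ↦ (hf x (interior_subset hx)).hasDerivWithinAt)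
    fun x hx ↦ hf'₀ x (interior_subset hx)

theorem antitoneOn_of_hasDerivAt_nonpos (hD : Convex ℝ D) (hf : ∀ x ∈ D, HasDerivAt f (f' x) x)
    (hf'₀ : ∀ x ∈ D, f' x ≤ 0) : AntitoneOn f D :=
  antitoneOn_of_hasDerivWithinAt_nonpos hD (fun x hx ↦ (hf x hx).continuousAt.continuousWithinAt)
    (fun x hx ↦ (hf x (interior_subset hx)).hasDerivWithinAt)
    fun x hx ↦ hf'₀ x (interior_subset hx)

theorem strictMonoOn_of_hasDerivAt_pos (hD : Convex ℝ D) (hf : ∀ x ∈ D, HasDerivAt f (f' x) x)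
    (hf'₀ : ∀ x ∈ D, 0 < f' x) : StrictMonoOn f D :=
  strictMonoOn_of_hasDerivWithinAt_pos hD (fun x hx ↦ (hf x hx).continuousAt.continuousWithinAt)
    (fun x hx ↦ (hf x (interior_subset hx)).hasDerivWithinAt)
    fun x hx ↦ hf'₀ x (interior_subset hx)

theorem Convex.eq_of_hasDerivAt_zero (hD : Convex ℝ D) (hf : ∀ x ∈ D, HasDerivAt f 0 x)
    {x y : ℝ} (hx : x ∈ D) (hy : y ∈ D) : f x = f y := by
  have := hD.norm_image_sub_le_of_norm_hasDerivWithin_le (C := 0)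
    (fun z hz ↦ (hf z hz).hasDerivWithinAt) (fun _ _ ↦ norm_zero.le) hx hy
  rw [zero_mul, norm_le_zero_iff, sub_eq_zero] at this
  exact this.symm

end Calculus

def MassShell (I : Set ℝ) (L : ℝ) (u v pu pv : ℝ → ℝ) : Prop :=
  ∀ s ∈ I, 4 * tOf u v s ^ 2 * rOf u v s ^ 2 * pu s * pv s = L ^ 2

theorem tOf_nonneg (u v : ℝ → ℝ) (s : ℝ) : 0 ≤ tOf u v s := by
  unfold tOf
  positivity

namespace FLRWGeodesicSystem

variable {I : Set ℝ} {L : ℝ} {u v pu pv : ℝ → ℝ} {s : ℝ}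

theorem rOf_pos (h : FLRWGeodesicSystem I L u v pu pv) (hs : s ∈ I) : 0 < rOf u v s :=
  h.2.1 s hs

theorem pu_nonneg (h : FLRWGeodesicSystem I L u v pu pv) (hs : s ∈ I) : 0 ≤ pu s :=
  h.2.2.1 s hs

theorem pv_nonneg (h : FLRWGeodesicSystem I L u v pu pv) (hs : s ∈ I) : 0 ≤ pv s :=
  h.2.2.2.1 s hs

theorem hasDerivAt_u (h : FLRWGeodesicSystem I L u v pu pv) (hs : s ∈ I) :
    HasDerivAt u (pu s) s :=
  h.2.2.2.2.1 s hs

theorem tOf_pos (h : FLRWGeodesicSystem I L u v pu pv) (hs : s ∈ I) : 0 < tOf u v s := by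
  have := h.1 s hs
  unfold tOf
  positivity

theorem sqrt_tOf (h : FLRWGeodesicSystem I L u v pu pv) (hs : s ∈ I) :
    √(tOf u v s) = (v s + u s) / 2 := by
  rw [tOf, show (v s + u s) ^ 2 / 4 = ((v s + u s) / 2) ^ 2 by ring,
    Real.sqrt_sq (by linarith [h.1 s hs])]

theorem hasDerivAt_rOf (h : FLRWGeodesicSystem I L u v pu pv) (hs : s ∈ I) :
    HasDerivAt (rOf u v) (pv s - pu s) s :=
  (h.2.2.2.2.2.1 s hs).sub (h.hasDerivAt_u hs)

theorem hasDerivAt_tOf (h : FLRWGeodesicSystem I L u v pu pv) (hs : s ∈ I) :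
    HasDerivAt (tOf u v) (√(tOf u v s) * (pu s + pv s)) s := by
  refine ((((h.2.2.2.2.2.1 s hs).add (h.hasDerivAt_u hs)).pow 2).div_const 4).congr_deriv ?_
  rw [h.sqrt_tOf hs]
  simp only [Pi.add_apply]
  push_cast
  ring

theorem hasDerivAt_pu_of_massShell (h : FLRWGeodesicSystem I L u v pu pv) (hs : s ∈ I)
    (hms : 4 * tOf u v s ^ 2 * rOf u v s ^ 2 * pu s * pv s = L ^ 2) :
    HasDerivAt pu (-(pu s * (pu s + pv s)) / √(tOf u v s) - 2 * pu s * pv s / rOf u v s) s := by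
  refine (h.2.2.2.2.2.2.1 s hs).congr_deriv ?_
  have := h.tOf_pos hs
  have := h.rOf_pos hs
  have := Real.sqrt_pos.2 (h.tOf_pos hs)
  rw [← hms]
  field_simp
  ring

theorem hasDerivAt_pv_of_massShell (h : FLRWGeodesicSystem I L u v pu pv) (hs : s ∈ I)
    (hms : 4 * tOf u v s ^ 2 * rOf u v s ^ 2 * pu s * pv s = L ^ 2) :
    HasDerivAt pv (-(pv s * (pu s + pv s)) / √(tOf u v s) + 2 * pu s * pv s / rOf u v s) s := by
  refine (h.2.2.2.2.2.2.2 s hs).congr_deriv ?_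
  have := h.tOf_pos hs
  have := h.rOf_pos hs
  have := Real.sqrt_pos.2 (h.tOf_pos hs)
  rw [← hms]
  field_simp
  ring

theorem hasDerivAt_tOf_mul_pv (h : FLRWGeodesicSystem I L u v pu pv) (hs : s ∈ I)
    (hms : 4 * tOf u v s ^ 2 * rOf u v s ^ 2 * pu s * pv s = L ^ 2) :
    HasDerivAt (fun s ↦ tOf u v s * pv s) (2 * tOf u v s * pu s * pv s / rOf u v s) s := by
  refine ((h.hasDerivAt_tOf hs).mul (h.hasDerivAt_pv_of_massShell hs hms)).congr_deriv ?_
  have := h.rOf_pos hs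
  have := Real.sqrt_pos.2 (h.tOf_pos hs)
  have hq2 := Real.sq_sqrt (h.tOf_pos hs).le
  set q := √(tOf u v s)
  rw [← hq2]
  field_simp
  ring

theorem hasDerivAt_tOf_mul_pu (h : FLRWGeodesicSystem I L u v pu pv) (hs : s ∈ I)
    (hms : 4 * tOf u v s ^ 2 * rOf u v s ^ 2 * pu s * pv s = L ^ 2) :
    HasDerivAt (fun s ↦ tOf u v s * pu s) (-(2 * tOf u v s * pu s * pv s / rOf u v s)) s := by
  refine ((h.hasDerivAt_tOf hs).mul (h.hasDerivAt_pu_of_massShell hs hms)).congr_deriv ?_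
  have := h.rOf_pos hs
  have := Real.sqrt_pos.2 (h.tOf_pos hs)
  have hq2 := Real.sq_sqrt (h.tOf_pos hs).le
  set q := √(tOf u v s)
  rw [← hq2]
  field_simp
  ring

theorem hasDerivAt_tOf_mul_rOf_sq_mul_pu (h : FLRWGeodesicSystem I L u v pu pv) (hs : s ∈ I)
    (hms : 4 * tOf u v s ^ 2 * rOf u v s ^ 2 * pu s * pv s = L ^ 2) :
    HasDerivAt (fun s ↦ tOf u v s * rOf u v s ^ 2 * pu s)
      (-(2 * tOf u v s * rOf u v s * pu s ^ 2)) s := by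
  refine (((h.hasDerivAt_tOf hs).mul ((h.hasDerivAt_rOf hs).pow 2)).mul
    (h.hasDerivAt_pu_of_massShell hs hms)).congr_deriv ?_
  have := h.rOf_pos hs
  have := Real.sqrt_pos.2 (h.tOf_pos hs)
  have hq2 := Real.sq_sqrt (h.tOf_pos hs).le
  set q := √(tOf u v s)
  simp only [Pi.mul_apply, Pi.pow_apply]
  rw [← hq2]
  field_simp
  ring

theorem monotoneOn_tOf_mul_pv (h : FLRWGeodesicSystem I L u v pu pv) (hI : Convex ℝ I)
    (hms : MassShell I L u v pu pv) :
    MonotoneOn (fun s ↦ tOf u v s * pv s) I :=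
  monotoneOn_of_hasDerivAt_nonneg hI (fun s hs ↦ h.hasDerivAt_tOf_mul_pv hs (hms s hs))
    fun s hs ↦ by
      have := h.tOf_pos hs; have := h.rOf_pos hs; have := h.pu_nonneg hs; have := h.pv_nonneg hs
      positivity

theorem antitoneOn_tOf_mul_rOf_sq_mul_pu (h : FLRWGeodesicSystem I L u v pu pv)
    (hI : Convex ℝ I)
    (hms : MassShell I L u v pu pv) :
    AntitoneOn (fun s ↦ tOf u v s * rOf u v s ^ 2 * pu s) I :=
  antitoneOn_of_hasDerivAt_nonpos hI
    (fun s hs ↦ h.hasDerivAt_tOf_mul_rOf_sq_mul_pu hs (hms s hs)) fun s hs ↦ by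
      have := h.tOf_pos hs; have := h.rOf_pos hs
      simp only [neg_nonpos]
      positivity

theorem monotoneOn_tOf_mul_sub (h : FLRWGeodesicSystem I L u v pu pv) (hI : Convex ℝ I)
    (hms : MassShell I L u v pu pv) :
    MonotoneOn (fun s ↦ tOf u v s * (pv s - pu s)) I := by
  refine monotoneOn_of_hasDerivAt_nonneg (f' := fun s ↦ 4 * tOf u v s * pu s * pv s / rOf u v s)
    hI (fun s hs ↦ ?_) fun s hs ↦ ?_
  · have := (h.hasDerivAt_tOf_mul_pv hs (hms s hs)).fun_sub (h.hasDerivAt_tOf_mul_pu hs (hms s hs))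
    simp only [← mul_sub] at this
    exact this.congr_deriv (by ring)
  · have := h.tOf_pos hs; have := h.rOf_pos hs; have := h.pu_nonneg hs; have := h.pv_nonneg hs
    positivity

theorem tOf_mul_add_eq (h : FLRWGeodesicSystem I L u v pu pv) (hI : Convex ℝ I)
    (hms : MassShell I L u v pu pv) {s₀ : ℝ}
    (hs₀ : s₀ ∈ I) (hs : s ∈ I) :
    tOf u v s * (pu s + pv s) = tOf u v s₀ * (pu s₀ + pv s₀) := by
  refine hI.eq_of_hasDerivAt_zero (f := fun s ↦ tOf u v s * (pu s + pv s)) (fun s hs ↦ ?_) hs hs₀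
  have := (h.hasDerivAt_tOf_mul_pu hs (hms s hs)).fun_add (h.hasDerivAt_tOf_mul_pv hs (hms s hs))
  simp only [← mul_add, neg_add_cancel] at this
  exact this

theorem tOf_mul_pv_le (h : FLRWGeodesicSystem I L u v pu pv) (hI : Convex ℝ I)
    (hms : MassShell I L u v pu pv) {s₀ : ℝ}
    (hs₀ : s₀ ∈ I) (hs : s ∈ I) :
    tOf u v s * pv s ≤ tOf u v s₀ * (pu s₀ + pv s₀) := by
  rw [← h.tOf_mul_add_eq hI hms hs₀ hs, mul_add, le_add_iff_nonneg_left]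
  exact mul_nonneg (h.tOf_pos hs).le (h.pu_nonneg hs)

theorem monotoneOn_u (h : FLRWGeodesicSystem I L u v pu pv) (hI : Convex ℝ I) :
    MonotoneOn u I :=
  monotoneOn_of_hasDerivAt_nonneg hI (fun _ hs ↦ h.hasDerivAt_u hs) fun _ hs ↦ h.pu_nonneg hs

section LateTime

variable {s₀ S : ℝ}

theorem pv_sub_pu_pos (h : FLRWGeodesicSystem (Ico s₀ S) L u v pu pv)
    (hms : MassShell (Ico s₀ S) L u v pu pv)
    (hpv₀ : 0 < pv s₀) (hpu₀ : pu s₀ ≤ 1 / 2 * pv s₀) (hs : s ∈ Ico s₀ S) :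
    0 < pv s - pu s := by
  have hs₀ : s₀ ∈ Ico s₀ S := left_mem_Ico.2 (hs.1.trans_lt hs.2)
  have hmono := h.monotoneOn_tOf_mul_sub (convex_Ico s₀ S) hms hs₀ hs hs.1
  have := h.tOf_pos hs₀
  have : 0 < pv s₀ - pu s₀ := by linarith
  exact pos_of_mul_pos_right ((by positivity : (0 : ℝ) < _).trans_le hmono) (h.tOf_pos hs).le

theorem strictMonoOn_rOf (h : FLRWGeodesicSystem (Ico s₀ S) L u v pu pv)
    (hms : MassShell (Ico s₀ S) L u v pu pv)
    (hpv₀ : 0 < pv s₀) (hpu₀ : pu s₀ ≤ 1 / 2 * pv s₀) :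
    StrictMonoOn (rOf u v) (Ico s₀ S) :=
  strictMonoOn_of_hasDerivAt_pos (convex_Ico s₀ S) (fun _ hs ↦ h.hasDerivAt_rOf hs)
    fun _ hs ↦ h.pv_sub_pu_pos hms hpv₀ hpu₀ hs

theorem pu_mul_rOf_sq_le (h : FLRWGeodesicSystem (Ico s₀ S) L u v pu pv)
    (hms : MassShell (Ico s₀ S) L u v pu pv)
    (hpu₀ : pu s₀ ≤ 1 / 2 * pv s₀) (hs : s ∈ Ico s₀ S) :
    pu s * rOf u v s ^ 2 ≤ rOf u v s₀ ^ 2 * (pv s - pu s) := by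
  have hs₀ : s₀ ∈ Ico s₀ S := left_mem_Ico.2 (hs.1.trans_lt hs.2)
  refine le_of_mul_le_mul_left ?_ (h.tOf_pos hs)
  calc tOf u v s * (pu s * rOf u v s ^ 2)
      = tOf u v s * rOf u v s ^ 2 * pu s := by ring
    _ ≤ tOf u v s₀ * rOf u v s₀ ^ 2 * pu s₀ :=
      h.antitoneOn_tOf_mul_rOf_sq_mul_pu (convex_Ico s₀ S) hms hs₀ hs hs.1
    _ ≤ rOf u v s₀ ^ 2 * (tOf u v s₀ * (pv s₀ - pu s₀)) := by
      rw [mul_comm (tOf u v s₀), mul_assoc]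
      have := h.tOf_pos hs₀
      gcongr
      linarith
    _ ≤ rOf u v s₀ ^ 2 * (tOf u v s * (pv s - pu s)) := mul_le_mul_of_nonneg_left
      (h.monotoneOn_tOf_mul_sub (convex_Ico s₀ S) hms hs₀ hs hs.1) (sq_nonneg _)
    _ = tOf u v s * (rOf u v s₀ ^ 2 * (pv s - pu s)) := by ring

theorem antitoneOn_add_sq_div_rOf (h : FLRWGeodesicSystem (Ico s₀ S) L u v pu pv)
    (hms : MassShell (Ico s₀ S) L u v pu pv)
    (hpu₀ : pu s₀ ≤ 1 / 2 * pv s₀) :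
    AntitoneOn (fun s ↦ u s + rOf u v s₀ ^ 2 / rOf u v s) (Ico s₀ S) := by
  refine antitoneOn_of_hasDerivAt_nonpos (convex_Ico s₀ S) (fun s hs ↦
    (h.hasDerivAt_u hs).add ((hasDerivAt_const s _).div (h.hasDerivAt_rOf hs)
      (h.rOf_pos hs).ne')) fun s hs ↦ ?_
  rw [zero_mul, zero_sub, neg_div, ← sub_eq_add_neg, sub_nonpos,
    le_div_iff₀ (by have := h.rOf_pos hs; positivity)]
  exact h.pu_mul_rOf_sq_le hms hpu₀ hs

theorem u_le_add_rOf (h : FLRWGeodesicSystem (Ico s₀ S) L u v pu pv)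
    (hms : MassShell (Ico s₀ S) L u v pu pv)
    (hpu₀ : pu s₀ ≤ 1 / 2 * pv s₀) (hs : s ∈ Ico s₀ S) :
    u s ≤ u s₀ + rOf u v s₀ := by
  have hs₀ : s₀ ∈ Ico s₀ S := left_mem_Ico.2 (hs.1.trans_lt hs.2)
  have hr₀ := h.rOf_pos hs₀
  have := h.antitoneOn_add_sq_div_rOf hms hpu₀ hs₀ hs hs.1
  simp only [sq, mul_div_cancel_right₀ _ hr₀.ne'] at this
  have : 0 ≤ rOf u v s₀ * rOf u v s₀ / rOf u v s := by have := h.rOf_pos hs; positivity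
  linarith

end LateTime

end FLRWGeodesicSystem

theorem flrw_geodesic_late_time_estimates_general (s₀ S L : ℝ)
    (u v pu pv : ℝ → ℝ)
    (hsys : FLRWGeodesicSystem (Ico s₀ S) L u v pu pv)
    (hms : ∀ s ∈ Ico s₀ S,
      4 * (tOf u v s) ^ 2 * (rOf u v s) ^ 2 * pu s * pv s = L ^ 2)
    (hpv₀ : 0 < pv s₀) (hpu₀ : pu s₀ ≤ 1 / 2 * pv s₀) :
    (∀ s ∈ Ico s₀ S,
      tOf u v s₀ * pv s₀ ≤ tOf u v s * pv s ∧
      tOf u v s * pv s ≤ 2 * (tOf u v s₀ * pv s₀)) ∧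
    (∀ s ∈ Ico s₀ S,
      0 ≤ pu s ∧
      pu s ≤ 2 * tOf u v s₀ * (rOf u v s₀) ^ 2 * pv s₀ / (tOf u v s * (rOf u v s) ^ 2)) ∧
    ((∀ s ∈ Ico s₀ S,
        tOf u v s₀ * (pv s₀ - pu s₀) ≤ tOf u v s * (pv s - pu s)) ∧
      1 / 2 * (tOf u v s₀ * pv s₀) ≤ tOf u v s₀ * (pv s₀ - pu s₀) ∧
      StrictMonoOn (rOf u v) (Ico s₀ S)) ∧
    (MonotoneOn u (Ico s₀ S) ∧
      ∀ s ∈ Ico s₀ S, u s₀ ≤ u s ∧ u s ≤ u s₀ + 4 * rOf u v s₀) := by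
  have hI : Convex ℝ (Ico s₀ S) := convex_Ico s₀ S
  have mem (s : ℝ) (hs : s ∈ Ico s₀ S) : s₀ ∈ Ico s₀ S := left_mem_Ico.2 (hs.1.trans_lt hs.2)
  have ht₀pu₀ := mul_le_mul_of_nonneg_left hpu₀ (tOf_nonneg u v s₀)
  refine ⟨fun s hs ↦ ⟨hsys.monotoneOn_tOf_mul_pv hI hms (mem s hs) hs hs.1, ?_⟩,
    fun s hs ↦ ⟨hsys.pu_nonneg hs, ?_⟩,
    ⟨fun s hs ↦ hsys.monotoneOn_tOf_mul_sub hI hms (mem s hs) hs hs.1, by linarith,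
      hsys.strictMonoOn_rOf hms hpv₀ hpu₀⟩,
    hsys.monotoneOn_u hI, fun s hs ↦ ⟨hsys.monotoneOn_u hI (mem s hs) hs hs.1, ?_⟩⟩
  · linarith [hsys.tOf_mul_pv_le hI hms (mem s hs) hs, mul_nonneg (tOf_nonneg u v s₀) hpv₀.le]
  · have := hsys.tOf_pos hs
    have := hsys.rOf_pos hs
    rw [le_div_iff₀ (by positivity)]
    have hC := hsys.antitoneOn_tOf_mul_rOf_sq_mul_pu hI hms (mem s hs) hs hs.1
    have : tOf u v s₀ * rOf u v s₀ ^ 2 * pu s₀ ≤ tOf u v s₀ * rOf u v s₀ ^ 2 * (2 * pv s₀) :=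
      mul_le_mul_of_nonneg_left (by linarith) (by have := tOf_nonneg u v s₀; positivity)
    simp only at hC
    linarith
  · linarith [hsys.u_le_add_rOf hms hpu₀ hs, hsys.rOf_pos (mem s hs)]

/-- **Quantitative late-time estimates along FLRW null geodesics.**
Let `(u,v,pu,pv)` solve the FLRW null geodesic system on `[s₀,S)` with angular momentum
`L ≥ 0`, with the mass shell relation on `[s₀,S)`, `pv(s₀) > 0` and
`0 ≤ pu(s₀) ≤ (1/2)pv(s₀)`.  Then for all `s ∈ [s₀,S)`:
(i) `t(s₀)pv(s₀) ≤ t(s)pv(s) ≤ 2t(s₀)pv(s₀)`;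
(ii) `0 ≤ pu(s) ≤ 2t(s₀)r(s₀)²pv(s₀)/(t(s)r(s)²)`;
(iii) `t(s)(pv(s)−pu(s)) ≥ t(s₀)(pv(s₀)−pu(s₀)) ≥ (1/2)t(s₀)pv(s₀)` and `r` is strictly
increasing on `[s₀,S)`;
(iv) `u` is nondecreasing on `[s₀,S)` and `u(s₀) ≤ u(s) ≤ u(s₀) + 4r(s₀)`. -/
theorem flrw_geodesic_late_time_estimates (s₀ S L : ℝ) (hs₀S : s₀ < S) (hL : 0 ≤ L)
    (u v pu pv : ℝ → ℝ)
    (hsys : FLRWGeodesicSystem (Ico s₀ S) L u v pu pv)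
    (hms : ∀ s ∈ Ico s₀ S,
      4 * (tOf u v s) ^ 2 * (rOf u v s) ^ 2 * pu s * pv s = L ^ 2)
    (hpv₀ : 0 < pv s₀) (hpu₀ : pu s₀ ≤ 1 / 2 * pv s₀) :
    (∀ s ∈ Ico s₀ S,
      tOf u v s₀ * pv s₀ ≤ tOf u v s * pv s ∧
      tOf u v s * pv s ≤ 2 * (tOf u v s₀ * pv s₀)) ∧
    (∀ s ∈ Ico s₀ S,
      0 ≤ pu s ∧
      pu s ≤ 2 * tOf u v s₀ * (rOf u v s₀) ^ 2 * pv s₀ / (tOf u v s * (rOf u v s) ^ 2)) ∧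
    ((∀ s ∈ Ico s₀ S,
        tOf u v s₀ * (pv s₀ - pu s₀) ≤ tOf u v s * (pv s - pu s)) ∧
      1 / 2 * (tOf u v s₀ * pv s₀) ≤ tOf u v s₀ * (pv s₀ - pu s₀) ∧
      StrictMonoOn (rOf u v) (Ico s₀ S)) ∧
    (MonotoneOn u (Ico s₀ S) ∧
      ∀ s ∈ Ico s₀ S, u s₀ ≤ u s ∧ u s ≤ u s₀ + 4 * rOf u v s₀) :=
  flrw_geodesic_late_time_estimates_general s₀ S L u v pu pv hsys hms hpv₀ hpu₀
end
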